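/- The energy-momentum map F = (H, J) : T*S² → ℝ² of the spherical pendulum is proper: the preimage of any compact subset of ℝ² is compact. -/

import Mathlib

/-- T*S² realized as a subset of ℝ³ × ℝ³. -/
def CotangentS2 : Set ((ℝ × ℝ × ℝ) × (ℝ × ℝ × ℝ)) :=
  {q | q.1.1^2 + q.1.2.1^2 + q.1.2.2^2 = 1 ∧
       q.1.1 * q.2.1 + q.1.2.1 * q.2.2.1 + q.1.2.2 * q.2.2.2 = 0}

/-- The energy-momentum map F = (H, J) of the spherical pendulum, where
H(x,p) = (1/2)|p|² + z and J(x,p) = x p_y − y pₓ. -/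
noncomputable def EM (q : (ℝ × ℝ × ℝ) × (ℝ × ℝ × ℝ)) : ℝ × ℝ :=
  ((1/2) * (q.2.1^2 + q.2.2.1^2 + q.2.2.2^2) + q.1.2.2,
   q.1.1 * q.2.2.1 - q.1.2.1 * q.2.1)

/-!
On T*S² the position lies on the unit sphere, so `z ≥ -1` and the kinetic energy `|p|²/2 = H - z`
is at most `H + 1`. Hence every energy sublevel set is a closed bounded subset of ℝ⁶, i.e. compact,
and the preimage of a compact `K` is a closed subset of the sublevel set at `sup H(K)`.
-/

lemma continuous_EM : Continuous EM := by
  unfold EM; fun_prop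

lemma isClosed_cotangentS2 : IsClosed CotangentS2 :=
  (isClosed_eq (by fun_prop) continuous_const).inter (isClosed_eq (by fun_prop) continuous_const)

lemma norm_le_sqrt_sum_sq (v : ℝ × ℝ × ℝ) : ‖v‖ ≤ √(v.1 ^ 2 + v.2.1 ^ 2 + v.2.2 ^ 2) := by
  obtain ⟨a, b, c⟩ := v
  simp only [norm_prod_le_iff, Real.norm_eq_abs]
  refine ⟨Real.abs_le_sqrt ?_, Real.abs_le_sqrt ?_, Real.abs_le_sqrt ?_⟩ <;>
    linarith [sq_nonneg a, sq_nonneg b, sq_nonneg c]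

lemma norm_position_le_one {q : (ℝ × ℝ × ℝ) × (ℝ × ℝ × ℝ)} (hq : q ∈ CotangentS2) :
    ‖q.1‖ ≤ 1 := by
  simpa [hq.1] using norm_le_sqrt_sum_sq q.1

lemma norm_momentum_le_sqrt_energy {q : (ℝ × ℝ × ℝ) × (ℝ × ℝ × ℝ)} (hq : q ∈ CotangentS2) :
    ‖q.2‖ ≤ √(2 * (EM q).1 + 2) := by
  refine (norm_le_sqrt_sum_sq q.2).trans (Real.sqrt_le_sqrt ?_)
  have hz : -1 ≤ q.1.2.2 := by nlinarith [hq.1, sq_nonneg q.1.1, sq_nonneg q.1.2.1]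
  simp only [EM]
  linarith

lemma isCompact_energy_sublevel (c : ℝ) : IsCompact {q ∈ CotangentS2 | (EM q).1 ≤ c} := by
  have hclosed : IsClosed {q ∈ CotangentS2 | (EM q).1 ≤ c} :=
    isClosed_cotangentS2.inter (isClosed_le (continuous_fst.comp continuous_EM) continuous_const)
  refine Metric.isCompact_of_isClosed_isBounded hclosed ?_
  refine isBounded_iff_forall_norm_le.2 ⟨max 1 √(2 * c + 2), fun q ⟨hq, hc⟩ => ?_⟩
  exact norm_prod_le_iff.2
    ⟨le_max_of_le_left (norm_position_le_one hq),
      le_max_of_le_right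
        ((norm_momentum_le_sqrt_energy hq).trans (Real.sqrt_le_sqrt (by linarith)))⟩

/-- The energy-momentum map of the spherical pendulum is proper: the preimage in
T*S² of any compact subset of ℝ² is compact. -/
theorem spherical_pendulum_EM_proper (K : Set (ℝ × ℝ)) (hK : IsCompact K) :
    IsCompact {q ∈ CotangentS2 | EM q ∈ K} := by
  obtain ⟨c, hc⟩ := hK.bddAbove_image continuous_fst.continuousOn
  refine (isCompact_energy_sublevel c).of_isClosed_subset
    (isClosed_cotangentS2.inter (hK.isClosed.preimage continuous_EM)) ?_
  exact fun q ⟨hq, hqK⟩ => ⟨hq, hc ⟨_, hqK, rfl⟩⟩
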